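/- Let H be a complex Hilbert space, r ≥ 2, and let A_0, …, A_{r-1} be pairwise commuting bounded self-adjoint operators on H. Suppose (u_n)_{n≥0} ⊆ H satisfies the recurrence u_{n+r} = A_0 u_{n+r-1} + A_1 u_{n+r-2} + ⋯ + A_{r-1} u_n for all n ≥ 0. Then for every n ≥ r, u_n = Σ_{s=0}^{r-1} ρ(n−s, r; A) W_s, where W_s := Σ_{j=s}^{r-1} A_j u_{s+r-1-j} for s = 0, …, r−1. -/

import Mathlib

/-!
`ρ(·, r; A)` is the fundamental solution of the recurrence: it vanishes below `r`, equals `1`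
at `r`, and satisfies `ρ(m) = ∑ⱼ Aⱼ ρ(m - 1 - j)` for `m > r`. For commuting coefficients it
suffices to check the last identity in the commutative subring they generate, where it is
Pascal's rule `multinomial k = ∑_{kⱼ ≠ 0} multinomial (k - eⱼ)` transported along the bijection
`k ↦ k + eⱼ` from partitions of `d - (j + 1)` to partitions of `d` having a part `j + 1`.

Consequently `vₙ = ∑ₛ ρ(n - s) Wₛ` satisfies the recurrence of `u` up to the forcing term
`W_{n-r}`, and `W_{n-r}` is exactly the contribution of the initial values `u₀, …, u_{r-1}` to
`uₙ = ∑ⱼ Aⱼ u_{n-1-j}`; strong induction on `n` gives `uₙ = vₙ`.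
-/

open Finset

/-- The combinatorial operator coefficient `ρ(m, r; A)`: the sum, over multi-indices
`k = (k₀, …, k_{r-1}) ∈ ℤ₊ʳ` with `1·k₀ + 2·k₁ + ⋯ + r·k_{r-1} = m − r`, of the multinomial
coefficient `(k₀+⋯+k_{r-1})! / (k₀!⋯k_{r-1}!)` times `A₀^{k₀} ⋯ A_{r-1}^{k_{r-1}}`,
with the convention `ρ(m, r; A) = 0` for `m < r` (and in particular `ρ(r, r; A) = 1`). -/
noncomputable def rho {R : Type*} [Ring R] (r : ℕ) (A : ℕ → R) (m : ℕ) : R :=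
  if m < r then 0
  else ∑ k ∈ (Fintype.piFinset fun _ : Fin r => Finset.range (m - r + 1)).filter
      (fun k : Fin r → ℕ => ∑ j : Fin r, ((j : ℕ) + 1) * k j = m - r),
    (Nat.multinomial Finset.univ k : R) * (List.ofFn fun j : Fin r => A (j : ℕ) ^ k j).prod

open Nat

section Multinomial
variable {ι : Type*} [Fintype ι] [DecidableEq ι]

theorem Nat.succ_mul_multinomial_add_single (k : ι → ℕ) (j : ι) :
    (k j + 1) * multinomial univ (k + Pi.single j 1) =
      (∑ i, k i + 1) * multinomial univ k := by
  have hsum : ∑ i, (k + Pi.single j 1 : ι → ℕ) i = ∑ i, k i + 1 := by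
    simp [sum_add_distrib]
  have hprod : ∏ i, ((k + Pi.single j 1 : ι → ℕ) i)! = (k j + 1) * ∏ i, (k i)! := by
    rw [← mul_prod_erase _ _ (mem_univ j), ← mul_prod_erase _ (fun i => (k i)!) (mem_univ j),
      prod_congr rfl fun i hi => by rw [Pi.add_apply, Pi.single_eq_of_ne (ne_of_mem_erase hi),
        add_zero]]
    simp [factorial_succ, mul_assoc]
  apply Nat.eq_of_mul_eq_mul_left (prod_pos fun i _ => (k i).factorial_pos)
  calc (∏ i, (k i)!) * ((k j + 1) * multinomial univ (k + Pi.single j 1))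
      = (∑ i, k i + 1)! := by rw [← hsum, ← multinomial_spec, hprod]; ring
    _ = _ := by rw [factorial_succ, ← multinomial_spec]; ring

omit [Fintype ι] in
theorem Pi.sub_single_add_single {k : ι → ℕ} {j : ι} (hj : k j ≠ 0) :
    k - Pi.single j 1 + Pi.single j 1 = k := by
  funext i
  rcases eq_or_ne i j with rfl | hij
  · simp only [Pi.add_apply, Pi.sub_apply, Pi.single_eq_same]
    omega
  · simp [hij]

theorem Nat.multinomial_eq_sum_multinomial_sub_single (k : ι → ℕ) (hk : k ≠ 0) :
    multinomial univ k = ∑ j with k j ≠ 0, multinomial univ (k - Pi.single j 1) := by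
  obtain ⟨i₀, hi₀⟩ := Function.ne_iff.1 hk
  have hpos : 0 < ∑ i, k i :=
    (Nat.pos_of_ne_zero hi₀).trans_le (single_le_sum (fun _ _ => Nat.zero_le _) (mem_univ i₀))
  apply Nat.eq_of_mul_eq_mul_left hpos
  have hstep : ∀ j, k j ≠ 0 →
      (∑ i, k i) * multinomial univ (k - Pi.single j 1) = k j * multinomial univ k := by
    intro j hj
    have hsum : ∑ i, k i = ∑ i, (k - Pi.single j 1 : ι → ℕ) i + 1 := by
      conv_lhs => rw [← Pi.sub_single_add_single hj]
      simp [sum_add_distrib]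
    have hkj : k j = (k - Pi.single j 1 : ι → ℕ) j + 1 := by simp; omega
    have h := succ_mul_multinomial_add_single (k - Pi.single j 1) j
    rw [Pi.sub_single_add_single hj] at h
    rw [hsum, hkj, h]
  rw [mul_sum, sum_congr rfl fun j hj => hstep j (mem_filter.1 hj).2, ← sum_mul,
    sum_filter_ne_zero]

end Multinomial

/-- Multiplicity vectors of the partitions of `d` into parts of size at most `r`: the part
`j + 1` occurs `k j` times. -/
def partitionMultiplicities (r d : ℕ) : Finset (Fin r → ℕ) :=
  (Fintype.piFinset fun _ : Fin r => range (d + 1)).filter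
    fun k => ∑ j : Fin r, ((j : ℕ) + 1) * k j = d

section partitionMultiplicities
variable {r d : ℕ}

theorem mem_partitionMultiplicities {k : Fin r → ℕ} :
    k ∈ partitionMultiplicities r d ↔ ∑ j : Fin r, ((j : ℕ) + 1) * k j = d := by
  refine ⟨fun hk => (mem_filter.1 hk).2, fun hk => mem_filter.2 ⟨?_, hk⟩⟩
  refine Fintype.mem_piFinset.2 fun i => mem_range_succ_iff.2 ?_
  calc k i ≤ ((i : ℕ) + 1) * k i := Nat.le_mul_of_pos_left _ i.val.succ_pos
    _ ≤ d := hk ▸ single_le_sum (f := fun j : Fin r => ((j : ℕ) + 1) * k j)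
        (fun _ _ => Nat.zero_le _) (mem_univ i)

theorem sum_succ_mul_add_single (k : Fin r → ℕ) (j : Fin r) :
    ∑ i : Fin r, ((i : ℕ) + 1) * (k + Pi.single j 1 : Fin r → ℕ) i =
      ∑ i : Fin r, ((i : ℕ) + 1) * k i + (j + 1) := by
  simp [mul_add, sum_add_distrib, Pi.single_apply]

theorem prod_pow_add_single {R : Type*} [CommMonoid R] (A : ℕ → R) (k : Fin r → ℕ) (j : Fin r) :
    ∏ i : Fin r, A i ^ (k + Pi.single j 1 : Fin r → ℕ) i = A j * ∏ i : Fin r, A i ^ k i := by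
  simp only [Pi.add_apply, pow_add, prod_mul_distrib, Pi.single_apply, pow_ite, pow_one, pow_zero,
    prod_ite_eq', mem_univ, if_true]
  exact mul_comm _ _

end partitionMultiplicities

section Ring
variable {R : Type*} [Ring R] {r m : ℕ}

theorem rho_of_lt (A : ℕ → R) (hm : m < r) : rho r A m = 0 :=
  if_pos hm

theorem rho_self (A : ℕ → R) : rho r A r = 1 := by
  have hzero : (Fintype.piFinset fun _ : Fin r => range (0 + 1)).filter
      (fun k : Fin r → ℕ => ∑ j : Fin r, ((j : ℕ) + 1) * k j = 0) = {0} := by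
    ext k
    simp [funext_iff]
  rw [rho, if_neg (lt_irrefl r), Nat.sub_self, hzero, sum_singleton]
  simp [multinomial]

theorem rho_congr {A B : ℕ → R} (h : ∀ i < r, A i = B i) (m : ℕ) : rho r A m = rho r B m := by
  unfold rho
  congr! 6 with _ _ _ _ j
  rw [h j j.isLt]

theorem map_rho {S : Type*} [Ring S] (f : R →+* S) (A : ℕ → R) (m : ℕ) :
    f (rho r A m) = rho r (f ∘ A) m := by
  unfold rho
  split_ifs
  · exact map_zero f
  · simp [map_sum, map_list_prod, List.map_ofFn, Function.comp_def]

end Ring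

section CommRing
variable {R : Type*} [CommRing R] {r m : ℕ}

theorem rho_eq_sum_partitionMultiplicities (A : ℕ → R) (hm : r ≤ m) :
    rho r A m = ∑ k ∈ partitionMultiplicities r (m - r),
      (multinomial univ k : R) * ∏ i : Fin r, A i ^ k i := by
  rw [rho, if_neg (not_lt.2 hm)]
  exact sum_congr rfl fun k _ => by rw [List.prod_ofFn]

theorem sum_filter_ne_zero_multinomial_sub_single_eq_mul_rho (A : ℕ → R) (j : Fin r) :
    ∑ k ∈ partitionMultiplicities r (m - r) with k j ≠ 0,
        (multinomial univ (k - Pi.single j 1) : R) * ∏ i : Fin r, A i ^ k i =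
      A j * rho r A (m - 1 - j) := by
  by_cases hjm : r + j + 1 ≤ m
  · rw [rho_eq_sum_partitionMultiplicities A (by omega), mul_sum]
    symm
    refine sum_nbij' (· + Pi.single j 1) (· - Pi.single j 1) ?_ ?_ ?_ ?_ ?_
    · intro k hk
      simp only [mem_filter, mem_partitionMultiplicities, sum_succ_mul_add_single] at hk ⊢
      refine ⟨by omega, by simp⟩
    · intro k hk
      simp only [mem_filter, mem_partitionMultiplicities] at hk ⊢
      have := sum_succ_mul_add_single (k - Pi.single j 1) j
      rw [Pi.sub_single_add_single hk.2] at this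
      omega
    · intro k _
      exact add_tsub_cancel_right k _
    · intro k hk
      exact Pi.sub_single_add_single (mem_filter.1 hk).2
    · intro k _
      rw [add_tsub_cancel_right, prod_pow_add_single]
      ring
  · rw [rho_of_lt A (by omega), mul_zero]
    refine sum_eq_zero fun k hk => ?_
    obtain ⟨hk, hkj⟩ := mem_filter.1 hk
    have hweight : ((j : ℕ) + 1) * k j ≤ m - r :=
      mem_partitionMultiplicities.1 hk ▸ single_le_sum
        (f := fun i : Fin r => ((i : ℕ) + 1) * k i) (fun _ _ => Nat.zero_le _) (mem_univ j)
    have hpart : (j : ℕ) + 1 ≤ ((j : ℕ) + 1) * k j :=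
      Nat.le_mul_of_pos_right _ (Nat.pos_of_ne_zero hkj)
    omega

theorem rho_eq_sum_mul_rho_of_lt_of_commRing (A : ℕ → R) (hm : r < m) :
    rho r A m = ∑ j ∈ range r, A j * rho r A (m - 1 - j) := by
  have hpascal : ∀ k ∈ partitionMultiplicities r (m - r),
      (multinomial univ k : R) * ∏ i : Fin r, A i ^ k i =
        ∑ j with k j ≠ 0, (multinomial univ (k - Pi.single j 1) : R) * ∏ i : Fin r, A i ^ k i := by
    intro k hk
    have hk0 : k ≠ 0 := by
      rintro rfl
      have hweight := mem_partitionMultiplicities.1 hk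
      simp only [Pi.zero_apply, mul_zero, sum_const_zero] at hweight
      omega
    rw [multinomial_eq_sum_multinomial_sub_single k hk0, cast_sum, sum_mul]
  calc rho r A m
      = ∑ k ∈ partitionMultiplicities r (m - r), ∑ j with k j ≠ 0,
          (multinomial univ (k - Pi.single j 1) : R) * ∏ i : Fin r, A i ^ k i := by
        rw [rho_eq_sum_partitionMultiplicities A hm.le, sum_congr rfl hpascal]
    _ = ∑ j : Fin r, ∑ k ∈ partitionMultiplicities r (m - r) with k j ≠ 0,
          (multinomial univ (k - Pi.single j 1) : R) * ∏ i : Fin r, A i ^ k i :=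
        sum_comm' fun _ _ => by simp only [mem_filter, mem_univ, true_and, and_true]
    _ = ∑ j ∈ range r, A j * rho r A (m - 1 - j) := by
        simp_rw [sum_filter_ne_zero_multinomial_sub_single_eq_mul_rho]
        exact Fin.sum_univ_eq_sum_range (fun j => A j * rho r A (m - 1 - j)) r

end CommRing

section Commute
variable {R : Type*} [Ring R] {r m : ℕ}

open scoped IsMulCommutative in
theorem rho_eq_sum_mul_rho_of_lt {A : ℕ → R} (hcomm : ∀ i < r, ∀ j < r, Commute (A i) (A j))
    (hm : r < m) : rho r A m = ∑ j ∈ range r, A j * rho r A (m - 1 - j) := by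
  let S := Subring.closure (A '' Set.Iio r)
  have : IsMulCommutative S := Subring.isMulCommutative_closure <| by
    rintro _ ⟨i, hi, rfl⟩ _ ⟨j, hj, rfl⟩
    exact hcomm i hi j hj
  let B : ℕ → S := fun i => if h : i < r then ⟨A i, Subring.subset_closure ⟨i, h, rfl⟩⟩ else 0
  have hB : ∀ i < r, S.subtype (B i) = A i := fun i hi => by simp [B, hi]
  have hrho : ∀ n, S.subtype (rho r B n) = rho r A n := fun n => by
    rw [map_rho]
    exact rho_congr hB n
  rw [← hrho, rho_eq_sum_mul_rho_of_lt_of_commRing B hm, map_sum]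
  refine sum_congr rfl fun j hj => ?_
  rw [map_mul, hrho, hB j (mem_range.1 hj)]

theorem rho_eq_sum_mul_rho_add_ite {A : ℕ → R} (hcomm : ∀ i < r, ∀ j < r, Commute (A i) (A j))
    (m : ℕ) : rho r A m = ∑ j ∈ range r, A j * rho r A (m - 1 - j) + if m = r then 1 else 0 := by
  have hsum_zero : m ≤ r → ∑ j ∈ range r, A j * rho r A (m - 1 - j) = 0 := fun hm =>
    sum_eq_zero fun j hj => by rw [rho_of_lt A (by have := mem_range.1 hj; omega), mul_zero]
  rcases lt_trichotomy m r with hm | rfl | hm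
  · rw [rho_of_lt A hm, hsum_zero hm.le, if_neg hm.ne, add_zero]
  · rw [rho_self, hsum_zero le_rfl, if_pos rfl, zero_add]
  · rw [rho_eq_sum_mul_rho_of_lt hcomm hm, if_neg hm.ne', add_zero]

end Commute

section Module
variable {R M : Type*} [Ring R] [AddCommGroup M] [Module R M] {r : ℕ} {A : ℕ → R}

theorem sum_rho_smul_eq (hcomm : ∀ i < r, ∀ j < r, Commute (A i) (A j)) (W : ℕ → M) (n : ℕ) :
    ∑ s ∈ range r, rho r A (n - s) • W s =
      ∑ j ∈ range r, A j • ∑ s ∈ range r, rho r A (n - 1 - j - s) • W s +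
        ∑ s ∈ range r, if n - s = r then W s else 0 := by
  simp_rw [rho_eq_sum_mul_rho_add_ite hcomm (n - _), add_smul, sum_smul, mul_smul, ite_smul,
    one_smul, zero_smul, sum_add_distrib, smul_sum]
  rw [sum_comm]
  congr! 4 with j _ s _
  rw [show n - s - 1 - j = n - 1 - j - s by omega]

theorem sum_rho_smul_eq_zero_of_lt (W : ℕ → M) {n : ℕ} (hn : n < r) :
    ∑ s ∈ range r, rho r A (n - s) • W s = 0 :=
  sum_eq_zero fun s _ => by rw [rho_of_lt A (by omega), zero_smul]

theorem sum_filter_smul_eq_sum_ite (u : ℕ → M) {n : ℕ} (hn : r ≤ n) :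
    ∑ j ∈ range r with n - 1 - j < r, A j • u (n - 1 - j) =
      ∑ s ∈ range r, if n - s = r then ∑ j ∈ Icc s (r - 1), A j • u (s + (r - 1 - j)) else 0 := by
  have hs : ∀ s ∈ range r, (n - s = r ↔ n - r = s) := fun s hs => by rw [mem_range] at hs; omega
  rw [sum_congr rfl fun s hs' => if_congr (hs s hs') rfl rfl, sum_ite_eq]
  split_ifs with hnr
  all_goals rw [mem_range] at hnr
  · have hIcc : {j ∈ range r | n - 1 - j < r} = Icc (n - r) (r - 1) := by
      ext j
      simp only [mem_filter, mem_range, mem_Icc]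
      omega
    rw [hIcc]
    exact sum_congr rfl fun j hj => by rw [mem_Icc] at hj; congr 2; omega
  · exact sum_eq_zero fun j hj => by simp only [mem_filter, mem_range] at hj; omega

theorem eq_sum_rho_smul_of_recurrence (hcomm : ∀ i < r, ∀ j < r, Commute (A i) (A j))
    (u : ℕ → M) (hrec : ∀ n, u (n + r) = ∑ j ∈ range r, A j • u (n + (r - 1 - j))) :
    ∀ n, r ≤ n →
      u n = ∑ s ∈ range r, rho r A (n - s) • ∑ j ∈ Icc s (r - 1), A j • u (s + (r - 1 - j)) := by
  set W : ℕ → M := fun s => ∑ j ∈ Icc s (r - 1), A j • u (s + (r - 1 - j))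
  set v : ℕ → M := fun n => ∑ s ∈ range r, rho r A (n - s) • W s
  intro n
  induction n using Nat.strong_induction_on with
  | _ n ih =>
    intro hn
    have hu : u n = ∑ j ∈ range r, A j • u (n - 1 - j) := by
      obtain ⟨n, rfl⟩ := Nat.exists_eq_add_of_le' hn
      rw [hrec]
      exact sum_congr rfl fun j hj => by have := mem_range.1 hj; congr 2; omega
    have hinitial : ∑ j ∈ range r, A j • (u (n - 1 - j) - v (n - 1 - j)) =
        ∑ s ∈ range r, if n - s = r then W s else 0 := by
      rw [← sum_filter_smul_eq_sum_ite u hn, sum_filter]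
      refine sum_congr rfl fun j hj => ?_
      split_ifs with hj'
      · have hv : v (n - 1 - j) = 0 := sum_rho_smul_eq_zero_of_lt W hj'
        rw [hv, sub_zero]
      · have huv : u (n - 1 - j) = v (n - 1 - j) :=
          ih _ (by have := mem_range.1 hj; omega) (by omega)
        rw [huv, sub_self, smul_zero]
    calc u n
        = ∑ j ∈ range r, A j • v (n - 1 - j) +
            ∑ j ∈ range r, A j • (u (n - 1 - j) - v (n - 1 - j)) := by
          rw [← sum_add_distrib, hu]
          simp_rw [← smul_add, add_sub_cancel]
      _ = v n := by rw [hinitial]; exact (sum_rho_smul_eq hcomm W n).symm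

end Module

theorem vector_recurrence_combinatorial_formula_general
    {H : Type*} [NormedAddCommGroup H] [InnerProductSpace ℂ H]
    {r : ℕ} (A : ℕ → H →L[ℂ] H)
    (hcomm : ∀ i < r, ∀ j < r, Commute (A i) (A j))
    (u : ℕ → H)
    (hrec : ∀ n : ℕ, u (n + r) = ∑ j ∈ Finset.range r, A j (u (n + (r - 1 - j)))) :
    ∀ n : ℕ, r ≤ n →
      u n = ∑ s ∈ Finset.range r, rho r A (n - s)
        (∑ j ∈ Finset.Icc s (r - 1), A j (u (s + (r - 1 - j)))) := by
  simpa only [ContinuousLinearMap.smul_def] using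
    eq_sum_rho_smul_of_recurrence hcomm u (by simpa only [ContinuousLinearMap.smul_def] using hrec)

/-- Combinatorial formula for a vector-valued sequence in a complex Hilbert space satisfying
a linear recurrence `u_{n+r} = A₀ u_{n+r-1} + ⋯ + A_{r-1} u_n` with pairwise commuting bounded
self-adjoint operator coefficients. -/
theorem vector_recurrence_combinatorial_formula
    {H : Type*} [NormedAddCommGroup H] [InnerProductSpace ℂ H] [CompleteSpace H]
    {r : ℕ} (hr : 2 ≤ r) (A : ℕ → H →L[ℂ] H)
    (hsa : ∀ i < r, IsSelfAdjoint (A i))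
    (hcomm : ∀ i < r, ∀ j < r, Commute (A i) (A j))
    (u : ℕ → H)
    (hrec : ∀ n : ℕ, u (n + r) = ∑ j ∈ Finset.range r, A j (u (n + (r - 1 - j)))) :
    ∀ n : ℕ, r ≤ n →
      u n = ∑ s ∈ Finset.range r, rho r A (n - s)
        (∑ j ∈ Finset.Icc s (r - 1), A j (u (s + (r - 1 - j)))) :=
  vector_recurrence_combinatorial_formula_general A hcomm u hrec
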